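/- arXiv:math/0402013 — 6 statements merged into one kernel-verified Lean document; each statement's English description precedes it below -/
import Mathlib

section
/- The generating metric function V(g;w) = sqrt(Q(g;w))·j(g;w), where Q = 1 + gw + w² and j(g;w) = exp((G/2)(π/2 + arctan(G/2) − arctan(w/h + G/2))) with G = g/h and h = sqrt(1−g²/4), satisfies V' = wV/Q and V'' = V/Q² (derivatives with respect to w). -/
/-! Writing `Q = 1 + g w + w²` as `h² + (w + g/2)²` gives `Q > 0` and `Φ' = -h/Q`, hence
`(log V)' = Q'/(2Q) + (G/2)Φ' = (g + 2w)/(2Q) - g/(2Q) = w/Q`. Differentiating `V' = wV/Q` once more,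
`V'' = V (Q + w² - w (g + 2w))/Q² = V/Q²`. -/

open Real

theorem HasDerivAt.sqrt_mul_exp {f ψ : ℝ → ℝ} {f' ψ' x : ℝ} (hf : HasDerivAt f f' x)
    (hψ : HasDerivAt ψ ψ' x) (hx : 0 < f x) :
    HasDerivAt (fun y => √(f y) * Real.exp (ψ y))
      ((f' / (2 * f x) + ψ') * (√(f x) * Real.exp (ψ x))) x := by
  refine ((hf.sqrt hx.ne').mul hψ.exp).congr_deriv ?_
  have hs : √(f x) ≠ 0 := (sqrt_pos.mpr hx).ne'
  field_simp
  rw [sq_sqrt hx.le]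
  ring

namespace GeneratingMetric

variable {g h : ℝ}

theorem quadratic_eq_sq_add (hh2 : h ^ 2 = 1 - g ^ 2 / 4) (w : ℝ) :
    1 + g * w + w ^ 2 = h ^ 2 + (w + g / 2) ^ 2 := by
  linear_combination -hh2

theorem quadratic_pos (hh : h ≠ 0) (hh2 : h ^ 2 = 1 - g ^ 2 / 4) (w : ℝ) :
    0 < 1 + g * w + w ^ 2 := by
  rw [quadratic_eq_sq_add hh2]
  positivity

theorem hasDerivAt_quadratic (g w : ℝ) :
    HasDerivAt (fun w => 1 + g * w + w ^ 2) (g + 2 * w) w := by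
  refine ((hasDerivAt_id' w).const_mul g |>.const_add 1 |>.add (hasDerivAt_pow 2 w)).congr_deriv ?_
  ring

theorem hasDerivAt_phase (hh : h ≠ 0) (hh2 : h ^ 2 = 1 - g ^ 2 / 4) (w : ℝ) :
    HasDerivAt (fun w => π / 2 + arctan (g / h / 2) - arctan (w / h + g / h / 2))
      (-(h / (1 + g * w + w ^ 2))) w := by
  have hinner : HasDerivAt (fun w => w / h + g / h / 2) (1 / h) w := by
    simpa using ((hasDerivAt_id w).div_const h).add_const (g / h / 2)
  refine (hinner.arctan.const_sub (π / 2 + arctan (g / h / 2))).congr_deriv ?_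
  have hsq : 1 + (w / h + g / h / 2) ^ 2 = (1 + g * w + w ^ 2) / h ^ 2 := by
    rw [quadratic_eq_sq_add hh2]
    field_simp
  have hQ := (quadratic_pos hh hh2 w).ne'
  rw [hsq]
  field_simp

theorem hasDerivAt_generatingMetric (hh : h ≠ 0) (hh2 : h ^ 2 = 1 - g ^ 2 / 4) (w : ℝ) :
    HasDerivAt
      (fun w => √(1 + g * w + w ^ 2) *
        exp (g / h / 2 * (π / 2 + arctan (g / h / 2) - arctan (w / h + g / h / 2))))
      (w * (√(1 + g * w + w ^ 2) *
        exp (g / h / 2 * (π / 2 + arctan (g / h / 2) - arctan (w / h + g / h / 2))))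
        / (1 + g * w + w ^ 2)) w := by
  have hQ := quadratic_pos hh hh2 w
  refine (HasDerivAt.sqrt_mul_exp (hasDerivAt_quadratic g w)
    ((hasDerivAt_phase hh hh2 w).const_mul (g / h / 2)) hQ).congr_deriv ?_
  field_simp
  ring

theorem deriv_deriv_eq_div_sq {V : ℝ → ℝ}
    (hV : ∀ w, HasDerivAt V (w * V w / (1 + g * w + w ^ 2)) w) {w : ℝ}
    (hQ : 1 + g * w + w ^ 2 ≠ 0) :
    deriv (deriv V) w = V w / (1 + g * w + w ^ 2) ^ 2 := by
  have hdV : deriv V = fun w => w * V w / (1 + g * w + w ^ 2) := funext fun w => (hV w).deriv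
  have hnum : HasDerivAt (fun w => w * V w) (1 * V w + w * (w * V w / (1 + g * w + w ^ 2))) w :=
    (hasDerivAt_id' w).mul (hV w)
  rw [hdV]
  refine (hnum.div (hasDerivAt_quadratic g w) hQ).congr_deriv ?_ |>.deriv
  congr 1
  rw [add_mul, mul_assoc w, div_mul_cancel₀ _ hQ]
  ring

end GeneratingMetric

theorem stmt_4 (g : ℝ) (hg1 : -2 < g) (hg2 : g < 2) (w : ℝ) :
    let h := Real.sqrt (1 - g^2/4)
    let G := g / h
    let Q : ℝ → ℝ := fun w => 1 + g*w + w^2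
    let Φ : ℝ → ℝ := fun w => Real.pi/2 + Real.arctan (G/2) - Real.arctan (w/h + G/2)
    let j : ℝ → ℝ := fun w => Real.exp ((G/2) * Φ w)
    let V : ℝ → ℝ := fun w => Real.sqrt (Q w) * j w
    deriv V w = w * V w / Q w ∧ deriv (deriv V) w = V w / (Q w)^2 := by
  intro h G Q Φ j V
  have hpos : 0 < 1 - g ^ 2 / 4 := by nlinarith
  have hh : h ≠ 0 := (sqrt_pos.mpr hpos).ne'
  have hh2 : h ^ 2 = 1 - g ^ 2 / 4 := sq_sqrt hpos.le
  have hV : ∀ x, HasDerivAt V (x * V x / Q x) x :=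
    GeneratingMetric.hasDerivAt_generatingMetric hh hh2
  exact ⟨(hV w).deriv,
    GeneratingMetric.deriv_deriv_eq_div_sq hV (GeneratingMetric.quadratic_pos hh hh2 w).ne'⟩
end

section
/- For the Finsleroid-Minkowski plane parameterization R¹(f) = 𝕊in f, R²(f) = ℂos f (unit vectors K = 1), the strong convexity criterion quotient ((R²)''(R¹)' − (R²)'(R¹)'')/((R²)' R¹ − R² (R¹)') equals 1/h², which is positive; hence the Finsleroid indicatrix on the Minkowski plane is strongly convex. -/
/-!
Both `R¹` and `R²` have the form `(b sin f + c cos f) e^{a (f - π/2)}` with `a = G/2`, so they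
solve the constant-coefficient equation `y'' = 2a y' - (1 + a²) y`, whose characteristic roots
are `a ± i`. For any two solutions `u, v` of `y'' = p y' - q y` the quotient
`(v'' u' - v' u'') / (v' u - v u')` equals `q`, as long as the Wronskian `v' u - v u'` does not
vanish; here the Wronskian is `-e^{2a (f - π/2)} / h ≠ 0`, and `1 + a² = 1 + g²/(4h²) = 1/h²`.
-/

open Real

theorem div_wronskian_eq_of_second_order {K : Type*} [Field K] {u u' u'' v v' v'' p q : K}
    (hu : u'' = p * u' - q * u) (hv : v'' = p * v' - q * v) (hW : v' * u - v * u' ≠ 0) :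
    (v'' * u' - v' * u'') / (v' * u - v * u') = q := by
  rw [div_eq_iff hW, hu, hv]
  ring

noncomputable def sinCosMulExp (a b c x₀ : ℝ) (x : ℝ) : ℝ :=
  (b * sin x + c * cos x) * exp (a * (x - x₀))

namespace sinCosMulExp

variable (a b c x₀ : ℝ)

theorem hasDerivAt (x : ℝ) :
    HasDerivAt (sinCosMulExp a b c x₀) (sinCosMulExp a (b * a - c) (c * a + b) x₀ x) x := by
  have hlin : HasDerivAt (fun x => b * sin x + c * cos x) (b * cos x + c * -sin x) x :=
    ((hasDerivAt_sin x).const_mul b).add ((hasDerivAt_cos x).const_mul c)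
  have hexp : HasDerivAt (fun x => exp (a * (x - x₀))) (exp (a * (x - x₀)) * a) x := by
    simpa using (((hasDerivAt_id x).sub_const x₀).const_mul a).exp
  refine (hlin.mul hexp).congr_deriv ?_
  rw [sinCosMulExp]
  ring

theorem deriv_eq : deriv (sinCosMulExp a b c x₀) = sinCosMulExp a (b * a - c) (c * a + b) x₀ :=
  funext fun x => (hasDerivAt a b c x₀ x).deriv

theorem deriv_deriv (x : ℝ) :
    deriv (deriv (sinCosMulExp a b c x₀)) x =
      2 * a * deriv (sinCosMulExp a b c x₀) x - (1 + a ^ 2) * sinCosMulExp a b c x₀ x := by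
  simp only [deriv_eq, sinCosMulExp]
  ring

theorem wronskian (b₁ c₁ b₂ c₂ x : ℝ) :
    deriv (sinCosMulExp a b₂ c₂ x₀) x * sinCosMulExp a b₁ c₁ x₀ x
        - sinCosMulExp a b₂ c₂ x₀ x * deriv (sinCosMulExp a b₁ c₁ x₀) x =
      (b₂ * c₁ - b₁ * c₂) * exp (a * (x - x₀)) ^ 2 := by
  simp only [deriv_eq, sinCosMulExp]
  linear_combination (b₂ * c₁ - b₁ * c₂) * exp (a * (x - x₀)) ^ 2 * sin_sq_add_cos_sq x

end sinCosMulExp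

theorem stmt_10 (g : ℝ) (hg1 : -2 < g) (hg2 : g < 2) (f : ℝ) :
    let h := Real.sqrt (1 - g^2/4)
    let G := g / h
    let J : ℝ → ℝ := fun f => Real.exp (-(G/2) * (f - Real.pi/2))
    let R1 : ℝ → ℝ := fun f => Real.sin f / (h * J f)
    let R2 : ℝ → ℝ := fun f => (Real.cos f - (G/2) * Real.sin f) / J f
    (deriv (deriv R2) f * deriv R1 f - deriv R2 f * deriv (deriv R1) f)
      / (deriv R2 f * R1 f - R2 f * deriv R1 f) = 1/h^2
    ∧ 0 < 1/h^2 := by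
  intro h G J R1 R2
  have hpos : 0 < 1 - g ^ 2 / 4 := by nlinarith
  have hh : 0 < h := sqrt_pos.mpr hpos
  have hh2 : h ^ 2 = 1 - g ^ 2 / 4 := sq_sqrt hpos.le
  have hR1 : R1 = sinCosMulExp (G / 2) (1 / h) 0 (π / 2) := by
    funext x
    simp only [R1, J, sinCosMulExp, neg_mul, exp_neg]
    field_simp
    ring
  have hR2 : R2 = sinCosMulExp (G / 2) (-(G / 2)) 1 (π / 2) := by
    funext x
    simp only [R2, J, sinCosMulExp, neg_mul, exp_neg]
    field_simp
    ring
  have hW : deriv R2 f * R1 f - R2 f * deriv R1 f ≠ 0 := by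
    rw [hR1, hR2, sinCosMulExp.wronskian]
    have hE : 0 < exp (G / 2 * (f - π / 2)) ^ 2 / h := by positivity
    convert neg_ne_zero.mpr hE.ne' using 1
    ring
  have hq : 1 + (G / 2) ^ 2 = 1 / h ^ 2 := by
    simp only [G]
    field_simp
    linear_combination 4 * hh2
  refine ⟨?_, by positivity⟩
  rw [← hq]
  exact div_wronskian_eq_of_second_order (hR1 ▸ sinCosMulExp.deriv_deriv _ _ _ _ f)
    (hR2 ▸ sinCosMulExp.deriv_deriv _ _ _ _ f) hW
end

section
/- If Z = Z(q) is implicitly defined by the Finsleroid indicatrix equation K(g;q,Z) = 1 with Z + gq ≠ 0, then dZ/dq = −q/(Z + gq) and d²Z/dq² = −B/(Z+gq)³, where B = Z² + gqZ + q². -/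
/-!
Write `log K = log B / 2 + (G / 2) Φ`. Along `z = Z x` with `Z x ≠ 0` the sign in `Φ` is locally
constant, and since `1 + u ^ 2 = B / (h z) ^ 2` for the argument `u = x / (h z) + G / 2` of the
arctangent, `d/dx log K(x, Z x) = (Z' (Z + g x) + x) / B`. As `K ≡ 1` the numerator vanishes, so
`Z' = -x / (Z + g x)`; differentiating this once more and substituting `Z'` gives
`-B / (Z + g x) ^ 3`.

It remains to exclude `Z q = 0`. Near such a point `Φ(x, Z x) = -log B / G` is continuous with
value `π / 2`. Where `Z x < 0` we have `Φ < arctan (G / 2) < π / 2`, and where `Z x > 0` the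
arctangent of `u` must tend to `arctan (G / 2)`, so `x / (h Z x)` tends to `0` while `Z x → 0`,
forcing `x → 0 ≠ q`. Hence `Z` vanishes near `q`, and then `K(x, 0) = |x| e ^ (G π / 4) = 1` would
make `|x|` locally constant.
-/

noncomputable def Kfun (g q Z : ℝ) : ℝ :=
  Real.sqrt (Z^2 + g*q*Z + q^2) *
    Real.exp ((g / Real.sqrt (1 - g^2/4) / 2) *
      ((if 0 ≤ Z then Real.pi/2 else -(Real.pi/2)) +
        Real.arctan (g / Real.sqrt (1 - g^2/4) / 2) -
        Real.arctan (q / (Real.sqrt (1 - g^2/4) * Z) + g / Real.sqrt (1 - g^2/4) / 2)))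

open Real Filter Topology

namespace Finsleroid

noncomputable def h (g : ℝ) : ℝ := √(1 - g ^ 2 / 4)

noncomputable def G (g : ℝ) : ℝ := g / h g

def B (g x z : ℝ) : ℝ := z ^ 2 + g * x * z + x ^ 2

noncomputable def phase (g x z : ℝ) : ℝ :=
  (if 0 ≤ z then π / 2 else -(π / 2)) + arctan (G g / 2) - arctan (x / (h g * z) + G g / 2)

theorem Kfun_eq (g x z : ℝ) : Kfun g x z = √(B g x z) * exp (G g / 2 * phase g x z) := rfl

variable {g : ℝ}

theorem h_pos (hg : g ^ 2 < 4) : 0 < h g := sqrt_pos.2 (by linarith)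

theorem h_sq (hg : g ^ 2 < 4) : h g ^ 2 = 1 - g ^ 2 / 4 := sq_sqrt (by linarith)

theorem B_pos (hg : g ^ 2 < 4) {x z : ℝ} (hxz : z ≠ 0 ∨ x ≠ 0) : 0 < B g x z := by
  unfold B
  rcases hxz with hz | hx
  · nlinarith [sq_nonneg (2 * x + g * z), sq_pos_of_ne_zero hz]
  · nlinarith [sq_nonneg (2 * z + g * x), sq_pos_of_ne_zero hx]

theorem log_Kfun {x z : ℝ} (hB : 0 < B g x z) :
    log (Kfun g x z) = log (B g x z) / 2 + G g / 2 * phase g x z := by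
  rw [Kfun_eq, log_mul (sqrt_pos.2 hB).ne' (exp_ne_zero _), log_exp, log_sqrt hB.le]

-- At `z = 0` the paper's `Φ` is undefined; Lean's `x / 0 = 0` makes it `π / 2`.
theorem phase_zero (x : ℝ) : phase g x 0 = π / 2 := by simp [phase]

theorem phase_lt_of_neg (x : ℝ) {z : ℝ} (hz : z < 0) : phase g x z < arctan (G g / 2) := by
  rw [phase, if_neg hz.not_ge]
  linarith [neg_pi_div_two_lt_arctan (x / (h g * z) + G g / 2)]

theorem phase_of_pos (x : ℝ) {z : ℝ} (hz : 0 < z) :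
    phase g x z = π / 2 + arctan (G g / 2) - arctan (x / (h g * z) + G g / 2) := by
  rw [phase, if_pos hz.le]

theorem Kfun_zero (x : ℝ) : Kfun g x 0 = |x| * exp (G g / 2 * (π / 2)) := by
  rw [Kfun_eq, phase_zero, B]
  simp [sqrt_sq_eq_abs]

theorem continuousAt_B_comp {Z : ℝ → ℝ} {x : ℝ} (hZ : ContinuousAt Z x) :
    ContinuousAt (fun y => B g y (Z y)) x := by
  unfold B; fun_prop

theorem hasDerivAt_B_comp {Z : ℝ → ℝ} {z' x : ℝ} (hZ : HasDerivAt Z z' x) :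
    HasDerivAt (fun y => B g y (Z y)) ((2 * Z x + g * x) * z' + g * Z x + 2 * x) x :=
  (((hZ.fun_pow 2).fun_add (((hasDerivAt_id' x).const_mul g).fun_mul hZ)).fun_add
    ((hasDerivAt_id' x).fun_pow 2)).congr_deriv (by push_cast; ring)

theorem eventually_nonneg_iff_nonneg {Z : ℝ → ℝ} {x : ℝ} (hZ : ContinuousAt Z x) (hZx : Z x ≠ 0) :
    ∀ᶠ y in 𝓝 x, (0 ≤ Z y ↔ 0 ≤ Z x) := by
  rcases hZx.lt_or_gt with hneg | hpos
  · filter_upwards [hZ.eventually_lt continuousAt_const hneg] with y hy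
    exact ⟨fun h0 => by linarith, fun h0 => by linarith⟩
  · filter_upwards [continuousAt_const.eventually_lt hZ hpos] with y hy
    exact ⟨fun _ => hpos.le, fun _ => hy.le⟩

theorem hasDerivAt_phase_comp (hg : g ^ 2 < 4) {Z : ℝ → ℝ} {z' x : ℝ} (hZ : HasDerivAt Z z' x)
    (hZx : Z x ≠ 0) :
    HasDerivAt (fun y => phase g y (Z y)) (h g * (x * z' - Z x) / B g x (Z x)) x := by
  have hh := h_pos hg
  have hhZ : h g * Z x ≠ 0 := mul_ne_zero hh.ne' hZx
  set σ : ℝ := if 0 ≤ Z x then π / 2 else -(π / 2)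
  set u : ℝ := x / (h g * Z x) + G g / 2
  have hu : HasDerivAt (fun y => y / (h g * Z y) + G g / 2)
      ((1 * (h g * Z x) - x * (h g * z')) / (h g * Z x) ^ 2) x :=
    ((hasDerivAt_id' x).div (hZ.const_mul (h g)) hhZ).add_const _
  have hlocal : (fun y => phase g y (Z y)) =ᶠ[𝓝 x]
      fun y => σ + arctan (G g / 2) - arctan (y / (h g * Z y) + G g / 2) := by
    filter_upwards [eventually_nonneg_iff_nonneg hZ.continuousAt hZx] with y hy
    simp only [phase, σ, hy]
  have hu_sq : 1 + u ^ 2 = B g x (Z x) / (h g * Z x) ^ 2 := by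
    simp only [u, G, B]
    field_simp
    linear_combination (4 * Z x ^ 2) * h_sq hg
  refine (((hasDerivAt_arctan u).comp x hu).const_sub _).congr_of_eventuallyEq hlocal
    |>.congr_deriv ?_
  have hB : B g x (Z x) ≠ 0 := (B_pos hg (Or.inl hZx)).ne'
  rw [hu_sq]
  field_simp
  ring

theorem hasDerivAt_log_Kfun_comp (hg : g ^ 2 < 4) {Z : ℝ → ℝ} {z' x : ℝ} (hZ : HasDerivAt Z z' x)
    (hZx : Z x ≠ 0) :
    HasDerivAt (fun y => log (Kfun g y (Z y))) ((z' * (Z x + g * x) + x) / B g x (Z x)) x := by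
  have hB : 0 < B g x (Z x) := B_pos hg (.inl hZx)
  have hlocal : (fun y => log (Kfun g y (Z y))) =ᶠ[𝓝 x]
      fun y => log (B g y (Z y)) / 2 + G g / 2 * phase g y (Z y) := by
    filter_upwards [continuousAt_const.eventually_lt (continuousAt_B_comp hZ.continuousAt) hB]
      with y hy
    exact log_Kfun hy
  refine (((hasDerivAt_B_comp hZ).log hB.ne').div_const 2).add
      ((hasDerivAt_phase_comp hg hZ hZx).const_mul _)
    |>.congr_of_eventuallyEq hlocal |>.congr_deriv ?_
  have hh := (h_pos hg).ne'
  simp only [G]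
  field_simp
  ring

theorem mul_add_eq_neg_of_Kfun_eq_one (hg : g ^ 2 < 4) {Z : ℝ → ℝ} {z' x : ℝ}
    (hZ : HasDerivAt Z z' x) (hZx : Z x ≠ 0) (hK : ∀ᶠ y in 𝓝 x, Kfun g y (Z y) = 1) :
    z' * (Z x + g * x) + x = 0 := by
  have hconst : (fun y => log (Kfun g y (Z y))) =ᶠ[𝓝 x] fun _ => 0 := by
    filter_upwards [hK] with y hy
    rw [hy, log_one]
  have := (hasDerivAt_log_Kfun_comp hg hZ hZx).unique
    ((hasDerivAt_const x 0).congr_of_eventuallyEq hconst)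
  rwa [div_eq_zero_iff, or_iff_left (B_pos hg (.inl hZx)).ne'] at this

theorem continuousAt_phase_comp (hG : G g ≠ 0) {Z : ℝ → ℝ} {q : ℝ} (hZ : ContinuousAt Z q)
    (hB : 0 < B g q (Z q)) (hK : ∀ᶠ x in 𝓝 q, Kfun g x (Z x) = 1) :
    ContinuousAt (fun x => phase g x (Z x)) q := by
  have hlocal : (fun x => -log (B g x (Z x)) / G g) =ᶠ[𝓝 q] fun x => phase g x (Z x) := by
    filter_upwards [hK, continuousAt_const.eventually_lt (continuousAt_B_comp hZ) hB]
      with x hKx hBx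
    have := log_Kfun hBx
    rw [hKx, log_one] at this
    field_simp
    linarith
  exact (((continuousAt_B_comp hZ).log hB.ne').neg.div_const _).congr hlocal

theorem eventually_eq_zero_of_apply_eq_zero (hg : g ^ 2 < 4) (hg0 : g ≠ 0) {Z : ℝ → ℝ} {q : ℝ}
    (hZ : ContinuousAt Z q) (hK : ∀ᶠ x in 𝓝 q, Kfun g x (Z x) = 1) (hZq : Z q = 0)
    (hq : q ≠ 0) : ∀ᶠ x in 𝓝 q, Z x = 0 := by
  have hh := h_pos hg
  set A := arctan (G g / 2)
  have hphase : Tendsto (fun x => phase g x (Z x)) (𝓝 q) (𝓝 (π / 2)) := by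
    have := (continuousAt_phase_comp (div_ne_zero hg0 hh.ne') hZ (B_pos hg (.inr hq)) hK).tendsto
    rwa [hZq, phase_zero] at this
  by_contra hnot
  set F := 𝓝[{x | Z x ≠ 0}] q
  have : F.NeBot := frequently_iff_neBot.1 (not_eventually.1 hnot)
  have hphaseF : Tendsto (fun x => phase g x (Z x)) F (𝓝 (π / 2)) :=
    hphase.mono_left nhdsWithin_le_nhds
  have hpos : ∀ᶠ x in F, 0 < Z x := by
    filter_upwards [self_mem_nhdsWithin,
      hphaseF.eventually_const_lt (arctan_lt_pi_div_two (G g / 2))]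
      with x hx hAx
    exact (lt_or_gt_of_ne hx).resolve_left fun hneg => (phase_lt_of_neg x hneg).not_gt hAx
  have harctan : Tendsto (fun x => arctan (x / (h g * Z x) + G g / 2)) F (𝓝 A) := by
    have := hphaseF.const_sub (π / 2 + A)
    rw [add_sub_cancel_left] at this
    refine this.congr' ?_
    filter_upwards [hpos] with x hx
    rw [phase_of_pos x hx]
    ring
  have hu : Tendsto (fun x => x / (h g * Z x)) F (𝓝 0) := by
    have := (continuousAt_tan.2 (cos_arctan_pos _).ne').tendsto.comp harctan
    simp only [Function.comp_def, tan_arctan] at this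
    simpa using this.sub_const (G g / 2)
  have hF0 : Tendsto (fun x => x) F (𝓝 0) := by
    have := ((hZq ▸ hZ.tendsto.mono_left nhdsWithin_le_nhds).const_mul (h g)).mul hu
    rw [mul_zero] at this
    refine this.congr' ?_
    filter_upwards [self_mem_nhdsWithin] with x hx
    field_simp [hx]
  exact hq (tendsto_nhds_unique (tendsto_nhdsWithin_of_tendsto_nhds tendsto_id) hF0)

theorem apply_ne_zero_of_Kfun_eq_one (hg : g ^ 2 < 4) {Z : ℝ → ℝ} {q : ℝ}
    (hZ : ContinuousAt Z q) (hK : ∀ᶠ x in 𝓝 q, Kfun g x (Z x) = 1) (hne : Z q + g * q ≠ 0) :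
    Z q ≠ 0 := by
  intro hZq
  rw [hZq, zero_add] at hne
  obtain ⟨hg0, hq⟩ := mul_ne_zero_iff.1 hne
  have hKq : Kfun g q 0 = 1 := hZq ▸ hK.self_of_nhds
  have hq_only : ∀ᶠ x in 𝓝 q, x = q := by
    filter_upwards [eventually_eq_zero_of_apply_eq_zero hg hg0 hZ hK hZq hq, hK,
      eventually_ne_nhds (show q ≠ -q by intro hq'; apply hq; linarith)] with x hZx hKx hx
    rw [hZx, Kfun_zero, ← hKq, Kfun_zero] at hKx
    exact (abs_eq_abs.1 (mul_right_cancel₀ (exp_ne_zero _) hKx)).resolve_right hx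
  have hq_punctured : ∀ᶠ x in 𝓝[≠] q, x = q := nhdsWithin_le_nhds hq_only
  obtain ⟨x, hxq, hx⟩ := (hq_punctured.and self_mem_nhdsWithin).exists
  exact hx hxq

theorem hasDerivAt_neg_div_add_mul {Z : ℝ → ℝ} {z' q : ℝ} (hZ : HasDerivAt Z z' q)
    (hz' : z' = -q / (Z q + g * q)) (hW : Z q + g * q ≠ 0) :
    HasDerivAt (fun x => -x / (Z x + g * x)) (-B g q (Z q) / (Z q + g * q) ^ 3) q := by
  have hWd : HasDerivAt (fun x => Z x + g * x) (z' + g) q :=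
    (hZ.fun_add ((hasDerivAt_id' q).const_mul g)).congr_deriv (by ring)
  refine ((hasDerivAt_id' q).fun_neg.div hWd hW).congr_deriv ?_
  rw [hz', B]
  field_simp
  ring

end Finsleroid

open Finsleroid in
theorem stmt_13 (g : ℝ) (hg1 : -2 < g) (hg2 : g < 2)
    (Z : ℝ → ℝ) (U : Set ℝ) (hU : IsOpen U) (q : ℝ) (hqU : q ∈ U)
    (hZ : ContDiffOn ℝ 2 Z U)
    (hK : ∀ x ∈ U, Kfun g x (Z x) = 1)
    (hne : ∀ x ∈ U, Z x + g*x ≠ 0) :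
    deriv Z q = -q / (Z q + g*q)
    ∧ deriv (deriv Z) q
        = -((Z q)^2 + g*q*(Z q) + q^2) / (Z q + g*q)^3 := by
  have hg : g ^ 2 < 4 := by nlinarith
  have hZd : ∀ x ∈ U, HasDerivAt Z (deriv Z x) x := fun x hx =>
    ((hZ.contDiffAt (hU.mem_nhds hx)).differentiableAt (by norm_num)).hasDerivAt
  have hKnhds : ∀ x ∈ U, ∀ᶠ y in 𝓝 x, Kfun g y (Z y) = 1 := fun x hx =>
    eventually_of_mem (hU.mem_nhds hx) hK
  have hZq : Z q ≠ 0 :=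
    apply_ne_zero_of_Kfun_eq_one hg (hZd q hqU).continuousAt (hKnhds q hqU) (hne q hqU)
  have hfirst : ∀ x ∈ U, Z x ≠ 0 → deriv Z x = -x / (Z x + g * x) := fun x hx hZx => by
    rw [eq_div_iff (hne x hx)]
    linarith [mul_add_eq_neg_of_Kfun_eq_one hg (hZd x hx) hZx (hKnhds x hx)]
  have hderiv : deriv Z =ᶠ[𝓝 q] fun x => -x / (Z x + g * x) := by
    filter_upwards [hU.mem_nhds hqU, (hZd q hqU).continuousAt.eventually_ne hZq] with x hx hZx
    exact hfirst x hx hZx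
  refine ⟨hfirst q hqU hZq, ?_⟩
  rw [hderiv.deriv_eq]
  exact (hasDerivAt_neg_div_add_mul (hZd q hqU) (hfirst q hqU hZq) (hne q hqU)).deriv
end

section
/- The determinant of the quasi-Euclidean metric tensor n_{rs} = (1/h²) r_{rs} − (G²/4) L_r L_s is the constant h^{2(1−N)} det(r), independent of the point t ≠ 0. -/
/-!
Writing `L = r v` with `v = t / √(tᵀ r t)`, the tensor is the rank-one perturbation
`h⁻² r - (G²/4) (r v)(r v)ᵀ = h⁻² r (1 - (g²/4) v (r v)ᵀ)`, using `G² h² = g²`.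
The matrix determinant lemma gives the factor `1 - (g²/4) (r v)ᵀ v = 1 - g²/4 = h²`,
because `v` is `r`-normalised, so the determinant is `h^(-2N) det r · h²`.
-/

open Matrix

namespace Matrix

variable {n α : Type*} [Fintype n] [DecidableEq n]

theorem det_one_add_vecMulVec [CommRing α] (u v : n → α) :
    det (1 + vecMulVec u v) = 1 + v ⬝ᵥ u := by
  rw [vecMulVec_eq Unit, det_one_add_replicateCol_mul_replicateRow]

theorem det_add_vecMulVec_mulVec [CommRing α] (A : Matrix n n α) (u v : n → α) :
    det (A + vecMulVec (A *ᵥ u) v) = det A * (1 + v ⬝ᵥ u) := by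
  rw [← mul_vecMulVec, ← det_one_add_vecMulVec, ← det_mul, Matrix.mul_add, Matrix.mul_one]

theorem det_smul_sub_smul_vecMulVec_mulVec [Field α] (A : Matrix n n α) {c : α} (hc : c ≠ 0)
    (d : α) (u v : n → α) :
    det (c • A - d • vecMulVec (A *ᵥ u) v) =
      c ^ Fintype.card n * det A * (1 - d / c * (v ⬝ᵥ u)) := by
  have hperturb : c • A - d • vecMulVec (A *ᵥ u) v =
      c • A + vecMulVec ((c • A) *ᵥ (-(d / c) • u)) v := by
    rw [smul_mulVec, mulVec_smul, smul_smul, smul_vecMulVec, sub_eq_add_neg, ← neg_smul]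
    congr 2
    field_simp
  rw [hperturb, det_add_vecMulVec_mulVec, det_smul, dotProduct_smul, smul_eq_mul]
  ring

end Matrix

theorem stmt_16 (N : ℕ) (g : ℝ) (hg1 : -2 < g) (hg2 : g < 2)
    (r : Matrix (Fin N) (Fin N) ℝ) (hr : r.PosDef) (t : Fin N → ℝ) (ht : t ≠ 0) :
    let h := Real.sqrt (1 - g^2/4)
    let G := g / h
    let S := Real.sqrt (t ⬝ᵥ r *ᵥ t)
    let Llow : Fin N → ℝ := r *ᵥ (S⁻¹ • t)
    let nlow : Matrix (Fin N) (Fin N) ℝ :=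
      (1/h^2) • r - (G^2/4) • Matrix.vecMulVec Llow Llow
    nlow.det = h ^ (2 * (1 - (N : ℤ))) * r.det := by
  intro h G S Llow nlow
  have hh2 : h ^ 2 = 1 - g ^ 2 / 4 := Real.sq_sqrt (by nlinarith)
  have hh : h ≠ 0 := (Real.sqrt_pos.mpr (by nlinarith)).ne'
  have hS2 : S ^ 2 = t ⬝ᵥ r *ᵥ t := Real.sq_sqrt (hr.dotProduct_mulVec_pos ht).le
  have hS : S ≠ 0 := (Real.sqrt_pos.mpr (hr.dotProduct_mulVec_pos ht)).ne'
  have hnormalised : Llow ⬝ᵥ (S⁻¹ • t) = 1 := by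
    show (r *ᵥ (S⁻¹ • t)) ⬝ᵥ (S⁻¹ • t) = 1
    rw [mulVec_smul, smul_dotProduct, dotProduct_smul, dotProduct_comm, ← hS2, smul_eq_mul,
      smul_eq_mul]
    field_simp
  have hcoeff : G ^ 2 / 4 / (1 / h ^ 2) = 1 - h ^ 2 := by
    rw [show G = g / h from rfl, div_pow]
    field_simp
    linarith
  calc nlow.det
      = (1 / h ^ 2) ^ N * r.det * (1 - G ^ 2 / 4 / (1 / h ^ 2) * (Llow ⬝ᵥ (S⁻¹ • t))) := by
        simpa only [Fintype.card_fin] using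
          det_smul_sub_smul_vecMulVec_mulVec r (c := 1 / h ^ 2) (by positivity) (G ^ 2 / 4)
            (S⁻¹ • t) Llow
    _ = h ^ (2 * (1 - (N : ℤ))) * r.det := by
        rw [hnormalised, hcoeff, mul_one, sub_sub_cancel, _root_.zpow_mul,
          zpow_sub₀ (zpow_ne_zero 2 hh), zpow_one, zpow_natCast, zpow_ofNat]
        ring
end

section
/- Under the radial map t̃ = ξ(t)·t/h with ξ(t) = (S²(t)/2)^{(h−1)/2}, the quasi-Euclidean metric n^{rs} = h² r^{rs} + (g²/4)L^r L^s transforms into c^{pq} = k^p_r k^q_s n^{rs} = ξ² r^{pq}, where k^p_q = ∂t̃^p/∂t^q; i.e., the quasi-Euclidean metric is conformally flat. -/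
/-! Let `P = L Lᵀ` be the orthogonal projection onto the radial direction. The Jacobian of the
radial map is `k = (ξ/h)(1 - P) + ξ P`: tangential directions are scaled by `ξ/h`, the radial one
by `d(ξ S / h)/dS = ξ`. Since `h² + g²/4 = 1`, also `n = h²(1 - P) + P`. As `1 - P` and `P` are
complementary idempotents, `k n kᵀ = (ξ/h)² h² (1 - P) + ξ² P = ξ²`. -/

open Matrix

lemma IsIdempotentElem.smul_one_sub_add_smul_mul {𝕜 R : Type*} [CommRing 𝕜] [Ring R] [Algebra 𝕜 R]
    {e : R} (he : IsIdempotentElem e) (a b c d : 𝕜) :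
    (a • (1 - e) + b • e) * (c • (1 - e) + d • e) = (a * c) • (1 - e) + (b * d) • e := by
  simp only [add_mul, mul_add, smul_mul_smul_comm, he.one_sub.eq, he.eq, he.mul_one_sub_self,
    he.one_sub_mul_self, smul_zero, add_zero, zero_add]

lemma Matrix.isIdempotentElem_vecMulVec_self {n R : Type*} [Fintype n] [CommRing R] {v : n → R}
    (hv : v ⬝ᵥ v = 1) : IsIdempotentElem (vecMulVec v v) := by
  rw [IsIdempotentElem, vecMulVec_mul_vecMulVec, hv, one_smul]

lemma Matrix.mul_mul_transpose_apply {n R : Type*} [Fintype n] [CommRing R]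
    (k m : Matrix n n R) (p q : n) :
    (k * m * kᵀ) p q = ∑ r, ∑ s, k p r * k q s * m r s := by
  simp only [mul_apply, transpose_apply, Finset.sum_mul]
  rw [Finset.sum_comm]
  exact Finset.sum_congr rfl fun _ _ => Finset.sum_congr rfl fun _ _ => by ring

lemma sum_sq_pos_of_ne_zero {ι : Type*} [Fintype ι] {t : ι → ℝ} (ht : t ≠ 0) :
    0 < ∑ i, t i ^ 2 := by
  have h0 : ∑ i, t i ^ 2 ≠ 0 := by
    simpa only [dotProduct, ← sq] using dotProduct_self_eq_zero.not.2 ht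
  exact (Finset.sum_nonneg fun i _ => sq_nonneg (t i)).lt_of_ne' h0

lemma dotProduct_self_div_sqrt_sum_sq {ι : Type*} [Fintype ι] {t : ι → ℝ} (ht : t ≠ 0) :
    (fun i => t i / √(∑ i, t i ^ 2)) ⬝ᵥ (fun i => t i / √(∑ i, t i ^ 2)) = 1 := by
  have hQ := sum_sq_pos_of_ne_zero ht
  simp only [dotProduct, ← sq, div_pow, ← Finset.sum_div, Real.sq_sqrt hQ.le]
  exact div_self hQ.ne'

lemma fderiv_radial_apply_single {ι : Type*} [Fintype ι] [DecidableEq ι] {f : ℝ → ℝ} {f' : ℝ}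
    {t : ι → ℝ} (hf : HasDerivAt f f' (∑ i, t i ^ 2)) (p q : ι) :
    fderiv ℝ (fun x : ι → ℝ => f (∑ i, x i ^ 2) * x p) t (Pi.single q 1)
      = f (∑ i, t i ^ 2) * (if p = q then 1 else 0) + 2 * f' * t p * t q := by
  have hsum : HasFDerivAt (fun x : ι → ℝ => ∑ i, x i ^ 2)
      (∑ i, (2 * t i) • (ContinuousLinearMap.proj i : (ι → ℝ) →L[ℝ] ℝ)) t := by
    refine HasFDerivAt.fun_sum fun i _ => ?_
    simpa using (hasFDerivAt_apply (𝕜 := ℝ) i t).pow 2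
  have hprod : HasFDerivAt (fun x : ι → ℝ => f (∑ i, x i ^ 2) * x p) _ t :=
    (hf.comp_hasFDerivAt t hsum).mul (hasFDerivAt_apply p t)
  rw [hprod.fderiv]
  simp only [Function.comp_apply, _root_.add_apply, _root_.smul_apply,
    ContinuousLinearMap.proj_apply, Pi.single_apply, smul_eq_mul, mul_ite, mul_one, mul_zero,
    _root_.sum_apply, Finset.sum_ite_eq', Finset.mem_univ, if_true]
  ring

lemma jacobian_halfSumSq_rpow_radial {ι : Type*} [Fintype ι] [DecidableEq ι] {t : ι → ℝ}
    (ht : 0 < ∑ i, t i ^ 2) (e c : ℝ) :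
    (of fun p q => fderiv ℝ (fun x : ι → ℝ => ((∑ i, x i ^ 2) / 2) ^ e / c * x p) t
        (Pi.single q 1))
      = (((∑ i, t i ^ 2) / 2) ^ e / c) • (1 - vecMulVec (fun i => t i / √(∑ i, t i ^ 2))
          (fun i => t i / √(∑ i, t i ^ 2)))
        + (((∑ i, t i ^ 2) / 2) ^ e / c * (1 + 2 * e)) • vecMulVec
          (fun i => t i / √(∑ i, t i ^ 2)) (fun i => t i / √(∑ i, t i ^ 2)) := by
  set Q := ∑ i, t i ^ 2 with hQ
  have hf : HasDerivAt (fun u : ℝ => (u / 2) ^ e / c) (1 / 2 * e * (Q / 2) ^ (e - 1) / c) Q :=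
    (((hasDerivAt_id' Q).div_const 2).rpow_const (Or.inl (by positivity))).div_const c
  have hP : ∀ p q, vecMulVec (fun i => t i / √Q) (fun i => t i / √Q) p q = t p * t q / Q :=
    fun p q => by rw [vecMulVec_apply, div_mul_div_comm, ← sq, Real.sq_sqrt ht.le]
  ext p q
  rw [of_apply, fderiv_radial_apply_single hf, Real.rpow_sub_one (by positivity)]
  simp only [Matrix.add_apply, Matrix.smul_apply, Matrix.sub_apply, one_apply, hP, smul_eq_mul]
  field_simp
  split_ifs <;> ring

theorem stmt_17 (N : ℕ) (g : ℝ) (hg1 : -2 < g) (hg2 : g < 2)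
    (t : Fin N → ℝ) (ht : t ≠ 0) :
    let h := Real.sqrt (1 - g^2/4)
    let S : (Fin N → ℝ) → ℝ := fun x => Real.sqrt (∑ i, x i ^ 2)
    let ξ : (Fin N → ℝ) → ℝ := fun x => (S x ^ 2 / 2) ^ (((h - 1) / 2 : ℝ))
    let tilde : (Fin N → ℝ) → (Fin N → ℝ) := fun x => (ξ x / h) • x
    let L : Fin N → ℝ := fun i => t i / S t
    let nup : Matrix (Fin N) (Fin N) ℝ :=
      fun p q => h^2 * (if p = q then 1 else 0) + g^2/4 * L p * L q
    let k : Matrix (Fin N) (Fin N) ℝ :=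
      fun p q => fderiv ℝ (fun x => tilde x p) t (Pi.single q 1)
    ∀ p q, (∑ r', ∑ s', k p r' * k q s' * nup r' s')
      = ξ t ^ 2 * (if p = q then 1 else 0) := by
  intro h S ξ tilde L nup k p q
  have hh : 0 < h := Real.sqrt_pos.2 (by nlinarith)
  have hh2 : h ^ 2 = 1 - g ^ 2 / 4 := Real.sq_sqrt (by nlinarith)
  have hS : ∀ x, S x ^ 2 = ∑ i, x i ^ 2 := fun x => Real.sq_sqrt (by positivity)
  set P : Matrix (Fin N) (Fin N) ℝ := vecMulVec L L with hP
  have hPP : IsIdempotentElem P :=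
    isIdempotentElem_vecMulVec_self (dotProduct_self_div_sqrt_sum_sq ht)
  have hk : k = (ξ t / h) • (1 - P) + ξ t • P := by
    have hjac := jacobian_halfSumSq_rpow_radial (sum_sq_pos_of_ne_zero ht) ((h - 1) / 2) h
    rw [show 1 + 2 * ((h - 1) / 2) = h by ring, div_mul_cancel₀ _ hh.ne'] at hjac
    rw [show ξ t = ((∑ i, t i ^ 2) / 2) ^ ((h - 1) / 2) by simp only [ξ, hS]]
    refine Eq.trans ?_ hjac
    ext a b
    simp only [k, tilde, ξ, hS, of_apply, Pi.smul_apply, smul_eq_mul]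
  have hn : nup = h ^ 2 • (1 - P) + (1 : ℝ) • P := by
    ext a b
    simp only [nup, P, Matrix.add_apply, Matrix.smul_apply, Matrix.sub_apply, one_apply,
      vecMulVec_apply, smul_eq_mul, one_mul, hh2]
    split_ifs <;> ring
  have hkT : kᵀ = k := by simp [hk, hP]
  rw [← mul_mul_transpose_apply, hkT, hk, hn, hPP.smul_one_sub_add_smul_mul,
    hPP.smul_one_sub_add_smul_mul]
  have hξ : ξ t / h * h ^ 2 * (ξ t / h) = ξ t ^ 2 := by field_simp
  rw [hξ, mul_one, ← sq, ← smul_add, sub_add_cancel, Matrix.smul_apply, one_apply, smul_eq_mul]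
end

section
/- The vector function t(s) = (S(s)/a)·(sin(h(α−ν))/sin(hα))·t₁ + (S(s)/S(Δs))·(sin(hν)/sin(hα))·t₂, with S(s) = sqrt(a² + 2bs + s²), ν = arctan(sqrt(a²−b²)·s/(a² + bs)), satisfies (t(s), t(s)) = S²(s) for all s in the admissible range, given that (t₁,t₁) = a², (t₂,t₂) = S²(Δs), and (t₁,t₂) = a S(Δs) cos(hα) where α = (1/h) arccos((a²+bΔs)/(a S(Δs))). -/
/-!
Put `θ = hα`, `φ = hν(s)`, `e₁ = t₁ / a` and `e₂ = t₂ / S(Δs)`. The hypotheses say that `e₁` and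
`e₂` are unit vectors with `(e₁, e₂) = cos θ`, and `t(s) = S(s) (sin(θ - φ) e₁ + sin φ e₂) / sin θ`
is a rescaled spherical interpolation between them. Its squared length is `S(s)²` by
`sin²x + sin²y + 2 sin x sin y cos(x + y) = sin²(x + y)` with `x = θ - φ`, `y = φ`.
-/

open Matrix Real

theorem sin_sq_add_sin_sq_add_two_mul_sin_mul_sin_mul_cos_add (x y : ℝ) :
    sin x ^ 2 + sin y ^ 2 + 2 * sin x * sin y * cos (x + y) = sin (x + y) ^ 2 := by
  rw [sin_add, cos_add]
  linear_combination (-sin y ^ 2) * sin_sq_add_cos_sq x - sin x ^ 2 * sin_sq_add_cos_sq y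

theorem Matrix.smul_add_smul_dotProduct_self {n R : Type*} [Fintype n] [CommRing R]
    (x y : R) (u v : n → R) :
    (x • u + y • v) ⬝ᵥ (x • u + y • v) =
      x ^ 2 * (u ⬝ᵥ u) + 2 * x * y * (u ⬝ᵥ v) + y ^ 2 * (v ⬝ᵥ v) := by
  simp only [dotProduct_add, add_dotProduct, smul_dotProduct, dotProduct_smul, smul_eq_mul,
    dotProduct_comm v u]
  ring

theorem Matrix.slerp_dotProduct_self {n : Type*} [Fintype n] {u v : n → ℝ} {p q θ : ℝ}
    (hp : p ≠ 0) (hq : q ≠ 0) (hθ : sin θ ≠ 0) (hu : u ⬝ᵥ u = p ^ 2) (hv : v ⬝ᵥ v = q ^ 2)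
    (huv : u ⬝ᵥ v = p * q * cos θ) (r φ : ℝ) :
    (((r / p) * (sin (θ - φ) / sin θ)) • u + ((r / q) * (sin φ / sin θ)) • v) ⬝ᵥ
      (((r / p) * (sin (θ - φ) / sin θ)) • u + ((r / q) * (sin φ / sin θ)) • v) = r ^ 2 := by
  have key := sin_sq_add_sin_sq_add_two_mul_sin_mul_sin_mul_cos_add (θ - φ) φ
  rw [sub_add_cancel] at key
  rw [smul_add_smul_dotProduct_self, hu, hv, huv]
  field_simp
  linear_combination r ^ 2 * key

theorem add_two_mul_add_sq_pos_of_abs_lt {a b : ℝ} (hb : |b| < a) (s : ℝ) :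
    0 < a ^ 2 + 2 * b * s + s ^ 2 := by
  have hab : 0 < a ^ 2 - b ^ 2 := sub_pos.mpr (sq_lt_sq' (abs_lt.mp hb).1 (abs_lt.mp hb).2)
  nlinarith [sq_nonneg (b + s)]

theorem stmt_19_general (N : ℕ) (t₁ t₂ : Fin N → ℝ) (a b Δs h : ℝ)
    (ha : a = Real.sqrt (t₁ ⬝ᵥ t₁)) (ha0 : 0 < a) (hb : |b| < a)
    (S : ℝ → ℝ) (hS : S = fun s => Real.sqrt (a^2 + 2*b*s + s^2))
    (α : ℝ)
    (ν : ℝ → ℝ)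
    (hsin : Real.sin (h*α) ≠ 0)
    (h2 : t₂ ⬝ᵥ t₂ = S Δs ^ 2)
    (h12 : t₁ ⬝ᵥ t₂ = a * S Δs * Real.cos (h*α)) :
    ∀ s : ℝ,
      (((S s / a) * (Real.sin (h*(α - ν s)) / Real.sin (h*α))) • t₁
        + ((S s / S Δs) * (Real.sin (h * ν s) / Real.sin (h*α))) • t₂) ⬝ᵥ
      (((S s / a) * (Real.sin (h*(α - ν s)) / Real.sin (h*α))) • t₁
        + ((S s / S Δs) * (Real.sin (h * ν s) / Real.sin (h*α))) • t₂)
      = S s ^ 2 := by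
  intro s
  have h1 : t₁ ⬝ᵥ t₁ = a ^ 2 := by
    rw [ha, sq_sqrt (by simpa using dotProduct_self_star_nonneg t₁)]
  have hSΔ : S Δs ≠ 0 := by
    rw [hS]
    exact (sqrt_pos.mpr (add_two_mul_add_sq_pos_of_abs_lt hb Δs)).ne'
  rw [mul_sub]
  exact slerp_dotProduct_self ha0.ne' hSΔ hsin h1 h2 h12 (S s) (h * ν s)

theorem stmt_19 (N : ℕ) (t₁ t₂ : Fin N → ℝ) (a b Δs h : ℝ)
    (ha : a = Real.sqrt (t₁ ⬝ᵥ t₁)) (ha0 : 0 < a) (hb : |b| < a) (hΔ : 0 < Δs)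
    (hh1 : 0 < h) (hh2 : h ≤ 1)
    (S : ℝ → ℝ) (hS : S = fun s => Real.sqrt (a^2 + 2*b*s + s^2))
    (α : ℝ)
    (hα : α = (1/h) * Real.arccos ((t₁ ⬝ᵥ t₂)
        / (Real.sqrt (t₁ ⬝ᵥ t₁) * Real.sqrt (t₂ ⬝ᵥ t₂))))
    (ν : ℝ → ℝ)
    (hν : ν = fun s => Real.arctan (Real.sqrt (a^2 - b^2) * s / (a^2 + b*s)))
    (hsin : Real.sin (h*α) ≠ 0)
    (h2 : t₂ ⬝ᵥ t₂ = S Δs ^ 2)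
    (h12 : t₁ ⬝ᵥ t₂ = a * S Δs * Real.cos (h*α)) :
    ∀ s : ℝ,
      (((S s / a) * (Real.sin (h*(α - ν s)) / Real.sin (h*α))) • t₁
        + ((S s / S Δs) * (Real.sin (h * ν s) / Real.sin (h*α))) • t₂) ⬝ᵥ
      (((S s / a) * (Real.sin (h*(α - ν s)) / Real.sin (h*α))) • t₁
        + ((S s / S Δs) * (Real.sin (h * ν s) / Real.sin (h*α))) • t₂)
      = S s ^ 2 :=
  stmt_19_general N t₁ t₂ a b Δs h ha ha0 hb S hS α ν hsin h2 h12
end
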